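/- For each m ∈ ℕ, there exists a sequence of open discs D(aₙ, rₙ) with centers aₙ on the positive real axis decreasing to 0, with pairwise disjoint closures contained in 𝔻, such that the road runner K = 𝔻̄ \ ⋃ₙ D(aₙ, rₙ) contains 0, the family {D(aₙ, rₙ)} satisfies the Browder condition of order m − 1 at the origin, but R(K) has no nondegenerate bounded point derivation of order m at the origin. -/

import Mathlib

open scoped ENNReal
open Metric Set Filter

noncomputable section

/-- `R₀(K)`: restrictions to `K` of rational functions with poles off `K`. -/
def R0 (K : Set ℂ) : Set C(K, ℂ) :=
  {f | ∃ p q : Polynomial ℂ, (∀ z ∈ K, q.eval z ≠ 0) ∧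
      ∀ z : K, f z = p.eval (z : ℂ) / q.eval (z : ℂ)}

/-- `R(K)`: the uniform closure of `R₀(K)` in `C(K, ℂ)`. -/
def RK (K : Set ℂ) : Set C(K, ℂ) := closure (R0 K)

/-- `M_x`: the ideal of functions in `R(K)` vanishing at `x`. -/
def Mx (K : Set ℂ) (x : ℂ) : Set C(K, ℂ) :=
  {f | f ∈ RK K ∧ ∀ h : x ∈ K, f ⟨x, h⟩ = 0}

/-- `J_x`: the ideal of functions in `R(K)` vanishing on a neighborhood of `x` in `K`. -/
def Jx (K : Set ℂ) (x : ℂ) : Set C(K, ℂ) :=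
  {f | f ∈ RK K ∧ ∃ U : Set ℂ, IsOpen U ∧ x ∈ U ∧ ∀ z : K, (z : ℂ) ∈ U → f z = 0}

/-- The `m`-th ideal power of a set `S` in the ring `C(K, ℂ)`:
finite sums of `m`-fold products of elements of `S`. -/
def idealPow {K : Set ℂ} (S : Set C(K, ℂ)) (m : ℕ) : Set C(K, ℂ) :=
  {f | ∃ (n : ℕ) (g : Fin n → Fin m → C(K, ℂ)),
      (∀ i j, g i j ∈ S) ∧ f = ∑ i, ∏ j, g i j}

/-- `R(K)` is normal. -/
def RKNormal (K : Set ℂ) : Prop :=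
  ∀ K₀ K₁ : Set ℂ, K₀ ⊆ K → K₁ ⊆ K → IsClosed K₀ → IsClosed K₁ → Disjoint K₀ K₁ →
    ∃ f ∈ RK K, (∀ z : K, (z : ℂ) ∈ K₀ → f z = 0) ∧ (∀ z : K, (z : ℂ) ∈ K₁ → f z = 1)

/-- `R(K)` is strongly regular at `x`. -/
def StronglyRegularAt (K : Set ℂ) (x : ℂ) : Prop := closure (Jx K x) = Mx K x

/-- `R(K)` is weakly strongly regular. -/
def WeaklyStronglyRegular (K : Set ℂ) : Prop :=
  ∀ x ∈ K, ∃ m : ℕ, 1 ≤ m ∧ idealPow (Mx K x) m ⊆ closure (Jx K x)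

/-- A Swiss cheese: a compact subset of the closed unit disc with empty interior
such that `R(K) ≠ C(K)`. -/
def IsSwissCheese (K : Set ℂ) : Prop :=
  K.Nonempty ∧ IsCompact K ∧ K ⊆ closedBall (0 : ℂ) 1 ∧ interior K = ∅ ∧ RK K ≠ univ

/-- A point derivation of order `m` on `R(K)` at `a`. -/
def IsPDOrder (K : Set ℂ) (a : ℂ) (m : ℕ) (d : ℕ → C(K, ℂ) → ℂ) : Prop :=
  (∀ f ∈ RK K, ∀ h : a ∈ K, d 0 f = f ⟨a, h⟩) ∧
  (∀ k ≤ m, ∀ f ∈ RK K, ∀ g ∈ RK K, d k (f + g) = d k f + d k g) ∧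
  (∀ k ≤ m, ∀ c : ℂ, ∀ f ∈ RK K, d k (c • f) = c * d k f) ∧
  (∀ k, 1 ≤ k → k ≤ m → ∀ f ∈ RK K, ∀ g ∈ RK K,
      d k (f * g) = ∑ j ∈ Finset.range (k + 1), d j f * d (k - j) g)

/-- A point derivation of infinite order on `R(K)` at `a`. -/
def IsPDInf (K : Set ℂ) (a : ℂ) (d : ℕ → C(K, ℂ) → ℂ) : Prop :=
  (∀ f ∈ RK K, ∀ h : a ∈ K, d 0 f = f ⟨a, h⟩) ∧
  (∀ k, ∀ f ∈ RK K, ∀ g ∈ RK K, d k (f + g) = d k f + d k g) ∧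
  (∀ (k : ℕ) (c : ℂ), ∀ f ∈ RK K, d k (c • f) = c * d k f) ∧
  (∀ k, 1 ≤ k → ∀ f ∈ RK K, ∀ g ∈ RK K,
      d k (f * g) = ∑ j ∈ Finset.range (k + 1), d j f * d (k - j) g)

/-- There is a nondegenerate bounded point derivation of order `m` on `R(K)` at `a`. -/
def HasNBPD (K : Set ℂ) (a : ℂ) (m : ℕ) : Prop :=
  ∃ d : ℕ → C(K, ℂ) → ℂ, IsPDOrder K a m d ∧
    (∀ k ≤ m, Continuous fun f : RK K => d k f.1) ∧
    ∃ f ∈ RK K, d 1 f ≠ 0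

/-- There is a nondegenerate bounded point derivation of infinite order on `R(K)` at `a`. -/
def HasNBPDInf (K : Set ℂ) (a : ℂ) : Prop :=
  ∃ d : ℕ → C(K, ℂ) → ℂ, IsPDInf K a d ∧
    (∀ k, Continuous fun f : RK K => d k f.1) ∧
    ∃ f ∈ RK K, d 1 f ≠ 0

/-- The Browder term `r(D)/s_a(D)^{m+1}` for the disc with center `c` and radius `ρ`;
here `s_a(D) = |dist a c − ρ|` is the distance from `a` to the boundary circle. -/
def browderTerm (a c : ℂ) (ρ : ℝ) (m : ℕ) : ℝ≥0∞ :=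
  ENNReal.ofReal ρ / ENNReal.ofReal (|dist a c - ρ| ^ (m + 1))

/-- The `m`-th order Browder sum at `a` for a family of discs together with the unit disc. -/
def browderSum {ι : Type*} (c : ι → ℂ) (ρ : ι → ℝ) (a : ℂ) (m : ℕ) : ℝ≥0∞ :=
  browderTerm a 0 1 m + ∑' i, browderTerm a (c i) (ρ i) m

/-- Sup norm of `f` over `K`. -/
def supNormOn (K : Set ℂ) (f : ℂ → ℂ) : ℝ := ⨆ z : K, ‖f (z : ℂ)‖

/-- The rational function `p/q`. -/
def ratFun (p q : Polynomial ℂ) : ℂ → ℂ := fun z => p.eval z / q.eval z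

/-- `δ_{a,m}(f) = f⁽ᵐ⁾(a)/m!`. -/
def deltaVal (m : ℕ) (f : ℂ → ℂ) (a : ℂ) : ℂ := iteratedDeriv m f a / (m.factorial : ℂ)

/-- `δ_{a,m}` is continuous (bounded) on `R₀(K)` with respect to the sup norm. -/
def DeltaCont (K : Set ℂ) (a : ℂ) (m : ℕ) : Prop :=
  ∃ C : ℝ, ∀ p q : Polynomial ℂ, (∀ z ∈ K, q.eval z ≠ 0) →
    ‖deltaVal m (ratFun p q) a‖ ≤ C * supNormOn K (ratFun p q)

/-- The square root of a plane set: `{z : z² ∈ E}`. -/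
def sqrtSet (E : Set ℂ) : Set ℂ := {z | z ^ 2 ∈ E}

/-- The restriction of `z ↦ zᵐ` to `K`. -/
def zpowMap (K : Set ℂ) (m : ℕ) : C(K, ℂ) :=
  ⟨fun z => (z : ℂ) ^ m, continuous_subtype_val.pow m⟩

/-- The restriction of `z ↦ (z−a)ⁿ` to `K`. -/
def zamMap (K : Set ℂ) (a : ℂ) (n : ℕ) : C(K, ℂ) :=
  ⟨fun z => ((z : ℂ) - a) ^ n, (continuous_subtype_val.sub continuous_const).pow n⟩

/-!
A bounded point derivation `(dₖ)` of order `m` at `a` is pinned down on the powers `(z - a)ⁿ`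
by `c = d₁(z - a)`: `dₖ((z - a)ⁿ) = 0` for `k < n` and `dₙ((z - a)ⁿ) = cⁿ`, so
`dₘ((z - a)ᵐ G) = cᵐ G(a)`. If rational functions `(z - a)ᵐ G_N` with `G_N(a) = 1` tend to `0`
uniformly on `K`, continuity of `dₘ` forces `c = 0`; then `d₁` kills every rational function,
hence all of `R(K)`.

For the road runner with centres `aₙ = 2^-(n+1)` and radii `rₙ = (n + 1) aₙ^(m+1) / 16`, take
`G_N(z) = a_N / (a_N - z)`: on `K` one has `|zᵐ G_N(z)| ≤ 2 a_N + (2 a_N)ᵐ a_N / r_N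
= 2 a_N + 2^(m+4) / (N + 1)`, while `∑ rₙ / (aₙ - rₙ)ᵐ ≤ 2ᵐ/16 ∑ (n + 1) aₙ < ∞` is the Browder
condition of order `m - 1`.
-/

open Polynomial in
lemma toContinuousMapOn_mem_R0 (K : Set ℂ) (p : ℂ[X]) : p.toContinuousMapOn K ∈ R0 K :=
  ⟨p, 1, fun _ _ => by simp, fun z => by simp⟩

lemma mul_mem_R0 {K : Set ℂ} {f g : C(K, ℂ)} (hf : f ∈ R0 K) (hg : g ∈ R0 K) :
    f * g ∈ R0 K := by
  obtain ⟨p, q, hq, hpq⟩ := hf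
  obtain ⟨p', q', hq', hpq'⟩ := hg
  exact ⟨p * p', q * q', fun z hz => by simp [hq z hz, hq' z hz],
    fun z => by simp [hpq, hpq', div_mul_div_comm]⟩

open Polynomial in
lemma zamMap_eq_toContinuousMapOn (K : Set ℂ) (a : ℂ) (n : ℕ) :
    zamMap K a n = ((X - C a) ^ n).toContinuousMapOn K := by
  ext z; simp [zamMap]

lemma zamMap_mem_R0 (K : Set ℂ) (a : ℂ) (n : ℕ) : zamMap K a n ∈ R0 K :=
  zamMap_eq_toContinuousMapOn K a n ▸ toContinuousMapOn_mem_R0 K _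

lemma one_mem_RK (K : Set ℂ) : (1 : C(K, ℂ)) ∈ RK K :=
  subset_closure ⟨1, 1, fun _ _ => by simp, fun _ => by simp⟩

lemma zero_mem_RK (K : Set ℂ) : (0 : C(K, ℂ)) ∈ RK K :=
  subset_closure ⟨0, 1, fun _ _ => by simp, fun _ => by simp⟩

lemma eq_zero_of_mem_RK {K : Set ℂ} {φ : C(K, ℂ) → ℂ} (hφ : Continuous fun f : RK K => φ f)
    (hR0 : ∀ f ∈ R0 K, φ f = 0) {f : C(K, ℂ)} (hf : f ∈ RK K) : φ f = 0 :=
  Set.EqOn.of_subset_closure hR0 (continuousOn_iff_continuous_domRestrict.mpr hφ)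
    continuousOn_const subset_closure subset_rfl hf

namespace IsPDOrder

variable {K : Set ℂ} {a : ℂ} {m : ℕ} {d : ℕ → C(K, ℂ) → ℂ}

lemma apply_one_mul (hd : IsPDOrder K a m d) (ha : a ∈ K) (hm : 1 ≤ m) {f g : C(K, ℂ)}
    (hf : f ∈ RK K) (hg : g ∈ RK K) :
    d 1 (f * g) = f ⟨a, ha⟩ * d 1 g + d 1 f * g ⟨a, ha⟩ := by
  obtain ⟨hval, -, -, hleib⟩ := hd
  rw [hleib 1 le_rfl hm f hf g hg, Finset.sum_range_succ, Finset.sum_range_one,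
    hval f hf ha, hval g hg ha]

lemma apply_one_one_eq_zero (hd : IsPDOrder K a m d) (ha : a ∈ K) (hm : 1 ≤ m) : d 1 1 = 0 := by
  have h := hd.apply_one_mul ha hm (one_mem_RK K) (one_mem_RK K)
  simp only [mul_one, ContinuousMap.one_apply, one_mul] at h
  linear_combination -h

lemma apply_zamMap (hd : IsPDOrder K a m d) (ha : a ∈ K) {n j : ℕ} (hjm : j ≤ m)
    (hjn : j ≤ n) : d j (zamMap K a n) = if j = n then d 1 (zamMap K a 1) ^ n else 0 := by
  obtain ⟨hval, -, -, hleib⟩ := hd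
  have hmem : ∀ k, zamMap K a k ∈ RK K := fun k => subset_closure (zamMap_mem_R0 K a k)
  induction n generalizing j with
  | zero =>
    obtain rfl : j = 0 := by omega
    rw [hval _ (hmem 0) ha]
    simp [zamMap]
  | succ n ih =>
    rcases Nat.eq_zero_or_pos j with rfl | hj
    · rw [hval _ (hmem _) ha]
      simp [zamMap]
    have hsplit : zamMap K a (n + 1) = zamMap K a 1 * zamMap K a n := by
      ext; simp [zamMap, pow_succ, mul_comm]
    rw [hsplit, hleib j hj hjm _ (hmem 1) _ (hmem n), Finset.sum_eq_single 1]
    · rw [ih (by omega) (by omega)]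
      by_cases h : j = n + 1
      · subst h; simp [pow_succ, mul_comm]
      · simp [h, show j - 1 ≠ n by omega]
    · intro i hi hi1
      have := Finset.mem_range.mp hi
      rcases Nat.eq_zero_or_pos i with rfl | hi0
      · rw [hval _ (hmem 1) ha]
        simp [zamMap]
      · rw [ih (by omega) (by omega), if_neg (by omega), mul_zero]
    · intro h; simp at h; omega

lemma apply_zamMap_mul (hd : IsPDOrder K a m d) (ha : a ∈ K) (hm : 1 ≤ m) {G : C(K, ℂ)}
    (hG : G ∈ RK K) : d m (zamMap K a m * G) = d 1 (zamMap K a 1) ^ m * G ⟨a, ha⟩ := by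
  have ⟨hval, _, _, hleib⟩ := hd
  rw [hleib m hm le_rfl _ (subset_closure (zamMap_mem_R0 K a m)) G hG, Finset.sum_eq_single m]
  · rw [hd.apply_zamMap ha le_rfl le_rfl, if_pos rfl, Nat.sub_self, hval G hG ha]
  · intro i hi him
    have := Finset.mem_range.mp hi
    rw [hd.apply_zamMap ha (by omega) (by omega), if_neg him, zero_mul]
  · intro h; simp at h

open Polynomial in
lemma apply_one_toContinuousMapOn_eq_zero (hd : IsPDOrder K a m d) (ha : a ∈ K) (hm : 1 ≤ m)
    (hu : d 1 (zamMap K a 1) = 0) (p : ℂ[X]) : d 1 (p.toContinuousMapOn K) = 0 := by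
  set q := p /ₘ (X - C a)
  have hp : p.toContinuousMapOn K = p.eval a • 1 + zamMap K a 1 * q.toContinuousMapOn K := by
    ext z
    have := congrArg (eval (z : ℂ)) (modByMonic_add_div p (X - C a))
    rw [modByMonic_X_sub_C_eq_C_eval] at this
    simp only [eval_add, eval_C, eval_mul, eval_sub, eval_X] at this
    simp [zamMap, ← this, q]
  have hu_mem := subset_closure (zamMap_mem_R0 K a 1)
  have hq_mem := subset_closure (toContinuousMapOn_mem_R0 K q)
  have hsmul_mem : p.eval a • (1 : C(K, ℂ)) ∈ RK K :=
    subset_closure ⟨C (p.eval a), 1, fun _ _ => by simp, fun _ => by simp⟩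
  have hmul_mem := subset_closure (mul_mem_R0 (zamMap_mem_R0 K a 1)
    (toContinuousMapOn_mem_R0 K q))
  have ⟨_, hadd, hsmul, _⟩ := hd
  rw [hp, hadd 1 hm _ hsmul_mem _ hmul_mem, hsmul 1 hm _ _ (one_mem_RK K),
    hd.apply_one_one_eq_zero ha hm, hd.apply_one_mul ha hm hu_mem hq_mem, hu]
  simp [zamMap]

lemma apply_one_eq_zero_of_mem_R0 (hd : IsPDOrder K a m d) (ha : a ∈ K) (hm : 1 ≤ m)
    (hu : d 1 (zamMap K a 1) = 0) {f : C(K, ℂ)} (hf : f ∈ R0 K) : d 1 f = 0 := by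
  obtain ⟨p, q, hq, hpq⟩ := hf
  have hfq : f * q.toContinuousMapOn K = p.toContinuousMapOn K := by
    ext z; simp [hpq z, div_mul_cancel₀ _ (hq z z.2)]
  have h := hd.apply_one_mul ha hm (subset_closure ⟨p, q, hq, hpq⟩)
    (subset_closure (toContinuousMapOn_mem_R0 K q))
  simp only [hfq, hd.apply_one_toContinuousMapOn_eq_zero ha hm hu, mul_zero, zero_add,
    zero_eq_mul] at h
  exact h.resolve_right (by simpa using hq a ha)

end IsPDOrder

theorem not_hasNBPD_of_tendsto {K : Set ℂ} {a : ℂ} {m : ℕ} (ha : a ∈ K) (hm : 1 ≤ m)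
    {G : ℕ → C(K, ℂ)} (hG : ∀ N, G N ∈ R0 K) (hGa : ∀ N, G N ⟨a, ha⟩ = 1)
    (hlim : Tendsto (fun N => zamMap K a m * G N) atTop (nhds 0)) : ¬ HasNBPD K a m := by
  rintro ⟨d, hd, hcont, f, hf, hdf⟩
  have hmem : ∀ N, zamMap K a m * G N ∈ RK K :=
    fun N => subset_closure (mul_mem_R0 (zamMap_mem_R0 K a m) (hG N))
  have hd0 : d m 0 = 0 := by
    have ⟨_, hadd, _, _⟩ := hd
    simpa using hadd m le_rfl 0 (zero_mem_RK K) 0 (zero_mem_RK K)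
  have hdm : Tendsto (fun N => d m (zamMap K a m * G N)) atTop (nhds 0) := by
    rw [← hd0]
    exact ((hcont m le_rfl).tendsto ⟨0, zero_mem_RK K⟩).comp
      (tendsto_subtype_rng.mpr hlim : Tendsto (fun N => (⟨_, hmem N⟩ : RK K)) _ _)
  simp only [hd.apply_zamMap_mul ha hm (subset_closure (hG _)), hGa, mul_one] at hdm
  have hu : d 1 (zamMap K a 1) = 0 :=
    (pow_eq_zero_iff (by omega)).mp (tendsto_nhds_unique tendsto_const_nhds hdm)
  exact hdf (eq_zero_of_mem_RK (hcont 1 hm)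
    (fun g hg => hd.apply_one_eq_zero_of_mem_R0 ha hm hu hg) hf)

lemma norm_pow_mul_div_sub_le {m : ℕ} (hm : 1 ≤ m) {z : ℂ} {c r : ℝ} (hc : 0 < c) (hr : 0 < r)
    (hz : ‖z‖ ≤ 1) (hrz : r ≤ ‖(c : ℂ) - z‖) :
    ‖z ^ m * (c / (c - z))‖ ≤ 2 * c + (2 * c) ^ m * c / r := by
  set T := ‖(c : ℂ) - z‖
  have hT : 0 < T := hr.trans_le hrz
  have hzT : ‖z‖ ≤ c + T := by
    simpa [abs_of_pos hc, T, norm_sub_rev] using norm_le_norm_add_norm_sub' z (c : ℂ)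
  have hnorm : ‖z ^ m * (c / (c - z))‖ = ‖z‖ ^ m * c / T := by
    simp [Complex.norm_real, abs_of_pos hc, T, mul_div_assoc]
  rw [hnorm]
  rcases le_or_gt c T with hcT | hTc
  · have hzm : ‖z‖ ^ m * c ≤ 2 * c * T := by
      nlinarith [pow_le_of_le_one (norm_nonneg z) hz (by omega : m ≠ 0)]
    have : ‖z‖ ^ m * c / T ≤ 2 * c := (div_le_iff₀ hT).mpr hzm
    have : 0 ≤ (2 * c) ^ m * c / r := by positivity
    linarith
  · have hzm : ‖z‖ ^ m ≤ (2 * c) ^ m := pow_le_pow_left₀ (norm_nonneg z) (by linarith) m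
    calc ‖z‖ ^ m * c / T ≤ (2 * c) ^ m * c / r := by gcongr
      _ ≤ 2 * c + (2 * c) ^ m * c / r := by linarith

def roadRunnerCenter (n : ℕ) : ℝ := (1 / 2) ^ (n + 1)

def roadRunnerRadius (m n : ℕ) : ℝ := (n + 1) * roadRunnerCenter n ^ (m + 1) / 16

def roadRunner (m : ℕ) : Set ℂ :=
  closedBall 0 1 \ ⋃ n, ball (roadRunnerCenter n : ℂ) (roadRunnerRadius m n)

lemma roadRunnerCenter_pos (n : ℕ) : 0 < roadRunnerCenter n := by
  unfold roadRunnerCenter; positivity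

lemma roadRunnerCenter_le_half (n : ℕ) : roadRunnerCenter n ≤ 1 / 2 :=
  pow_le_of_le_one (by norm_num) (by norm_num) n.succ_ne_zero

lemma roadRunnerCenter_succ (n : ℕ) : roadRunnerCenter (n + 1) = roadRunnerCenter n / 2 := by
  unfold roadRunnerCenter; ring

lemma roadRunnerCenter_strictAnti : StrictAnti roadRunnerCenter :=
  fun _ _ hij => pow_lt_pow_right_of_lt_one₀ (by norm_num) (by norm_num) (by omega)

lemma tendsto_roadRunnerCenter : Tendsto roadRunnerCenter atTop (nhds 0) :=
  (tendsto_pow_atTop_nhds_zero_of_lt_one (by norm_num) (by norm_num)).comp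
    (tendsto_add_atTop_nat 1)

lemma succ_mul_roadRunnerCenter_le_one (n : ℕ) : (n + 1) * roadRunnerCenter n ≤ 1 := by
  have : ((n : ℝ) + 1) ≤ 2 ^ (n + 1) := by exact_mod_cast (Nat.lt_two_pow_self).le
  rw [roadRunnerCenter, one_div_pow, mul_one_div, div_le_one (by positivity)]
  exact this

lemma roadRunnerRadius_pos (m n : ℕ) : 0 < roadRunnerRadius m n := by
  have := roadRunnerCenter_pos n
  unfold roadRunnerRadius; positivity

lemma roadRunnerRadius_le {m : ℕ} (hm : 1 ≤ m) (n : ℕ) :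
    roadRunnerRadius m n ≤ roadRunnerCenter n / 16 := by
  have ha := roadRunnerCenter_pos n
  have hpow : roadRunnerCenter n ^ (m + 1) ≤ roadRunnerCenter n ^ 2 :=
    pow_le_pow_of_le_one ha.le ((roadRunnerCenter_le_half n).trans (by norm_num)) (by omega)
  calc roadRunnerRadius m n ≤ (n + 1) * roadRunnerCenter n ^ 2 / 16 := by
        unfold roadRunnerRadius; gcongr
    _ = ((n + 1) * roadRunnerCenter n) * roadRunnerCenter n / 16 := by ring
    _ ≤ 1 * roadRunnerCenter n / 16 := by gcongr; exact succ_mul_roadRunnerCenter_le_one n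
    _ = roadRunnerCenter n / 16 := by ring

lemma dist_roadRunnerCenter (i j : ℕ) :
    dist (roadRunnerCenter i : ℂ) (roadRunnerCenter j) =
      |roadRunnerCenter i - roadRunnerCenter j| := by
  rw [Complex.dist_eq, ← Complex.ofReal_sub, Complex.norm_real, Real.norm_eq_abs]

lemma closedBall_roadRunnerCenter_subset {m : ℕ} (hm : 1 ≤ m) (n : ℕ) :
    closedBall (roadRunnerCenter n : ℂ) (roadRunnerRadius m n) ⊆ ball 0 1 := by
  refine closedBall_subset_ball' ?_
  have := roadRunnerRadius_le hm n
  have := roadRunnerCenter_le_half n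
  have ha := roadRunnerCenter_pos n
  rw [dist_comm, dist_zero_left, Complex.norm_real, Real.norm_eq_abs, abs_of_pos ha]
  linarith

lemma pairwise_disjoint_closedBall_roadRunner {m : ℕ} (hm : 1 ≤ m) :
    Pairwise fun i j => Disjoint (closedBall (roadRunnerCenter i : ℂ) (roadRunnerRadius m i))
      (closedBall (roadRunnerCenter j : ℂ) (roadRunnerRadius m j)) := by
  refine (symm_disjoint.pairwise_on fun i =>
    closedBall (roadRunnerCenter i : ℂ) (roadRunnerRadius m i)).mpr fun i j hij => ?_
  refine closedBall_disjoint_closedBall ?_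
  have hj : roadRunnerCenter j ≤ roadRunnerCenter i / 2 :=
    roadRunnerCenter_succ i ▸ roadRunnerCenter_strictAnti.antitone hij
  have := roadRunnerRadius_le hm i
  have := roadRunnerRadius_le hm j
  have := roadRunnerCenter_pos i
  rw [dist_roadRunnerCenter, abs_of_pos (by linarith)]
  linarith

lemma zero_mem_roadRunner {m : ℕ} (hm : 1 ≤ m) : (0 : ℂ) ∈ roadRunner m := by
  refine ⟨mem_closedBall_self zero_le_one, ?_⟩
  simp only [mem_iUnion, mem_ball, not_exists, not_lt]
  intro n
  rw [dist_zero_left, Complex.norm_real, Real.norm_eq_abs, abs_of_pos (roadRunnerCenter_pos n)]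
  linarith [roadRunnerRadius_le hm n, roadRunnerCenter_pos n]

lemma norm_le_one_of_mem_roadRunner {m : ℕ} {z : ℂ} (hz : z ∈ roadRunner m) : ‖z‖ ≤ 1 := by
  simpa using hz.1

lemma roadRunnerRadius_le_norm_sub {m : ℕ} {z : ℂ} (hz : z ∈ roadRunner m) (n : ℕ) :
    roadRunnerRadius m n ≤ ‖(roadRunnerCenter n : ℂ) - z‖ := by
  have := hz.2
  simp only [mem_iUnion, mem_ball, not_exists, not_lt] at this
  simpa [dist_eq_norm, norm_sub_rev] using this n

lemma roadRunnerCenter_sub_ne_zero {m : ℕ} {z : ℂ} (hz : z ∈ roadRunner m) (n : ℕ) :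
    (roadRunnerCenter n : ℂ) - z ≠ 0 :=
  norm_pos_iff.mp ((roadRunnerRadius_pos m n).trans_le (roadRunnerRadius_le_norm_sub hz n))

lemma isCompact_roadRunner (m : ℕ) : IsCompact (roadRunner m) :=
  (isCompact_closedBall _ _).diff (isOpen_iUnion fun _ => isOpen_ball)

instance (m : ℕ) : CompactSpace (roadRunner m) :=
  isCompact_iff_compactSpace.mp (isCompact_roadRunner m)

def roadRunnerKernel (m N : ℕ) : C(roadRunner m, ℂ) where
  toFun z := roadRunnerCenter N / (roadRunnerCenter N - z)
  continuous_toFun := continuous_const.div (continuous_const.sub continuous_subtype_val)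
    fun z => roadRunnerCenter_sub_ne_zero z.2 N

open Polynomial in
lemma roadRunnerKernel_mem_R0 (m N : ℕ) : roadRunnerKernel m N ∈ R0 (roadRunner m) :=
  ⟨C (roadRunnerCenter N : ℂ), C (roadRunnerCenter N : ℂ) - X,
    fun _ hz => by simpa using roadRunnerCenter_sub_ne_zero hz N,
    fun _ => by simp [roadRunnerKernel]⟩

lemma roadRunnerKernel_apply_zero {m : ℕ} (hm : 1 ≤ m) (N : ℕ) :
    roadRunnerKernel m N ⟨0, zero_mem_roadRunner hm⟩ = 1 := by
  simp [roadRunnerKernel, (roadRunnerCenter_pos N).ne']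

lemma tendsto_zamMap_mul_roadRunnerKernel {m : ℕ} (hm : 1 ≤ m) :
    Tendsto (fun N => zamMap (roadRunner m) 0 m * roadRunnerKernel m N) atTop (nhds 0) := by
  set a := roadRunnerCenter
  set r := roadRunnerRadius m
  have hbound : ∀ N, ‖zamMap (roadRunner m) 0 m * roadRunnerKernel m N‖ ≤
      2 * a N + (2 * a N) ^ m * a N / r N := fun N => by
    have := roadRunnerCenter_pos N
    have := roadRunnerRadius_pos m N
    refine (ContinuousMap.norm_le _ (by positivity)).mpr fun z => ?_
    simpa [zamMap, roadRunnerKernel] using norm_pow_mul_div_sub_le hm (roadRunnerCenter_pos N)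
      (roadRunnerRadius_pos m N) (norm_le_one_of_mem_roadRunner z.2)
      (roadRunnerRadius_le_norm_sub z.2 N)
  have hrad : ∀ N : ℕ, (2 * a N) ^ m * a N / r N = 2 ^ m * 16 / (N + 1) := fun N => by
    have := (roadRunnerCenter_pos N).ne'
    simp only [a, r, roadRunnerRadius, mul_pow, pow_succ]
    field_simp
  have hlim : Tendsto (fun N : ℕ => 2 * a N + 2 ^ m * 16 / ((N : ℝ) + 1)) atTop (nhds 0) := by
    simpa using (tendsto_roadRunnerCenter.const_mul 2).add
      (tendsto_const_div_atTop_nhds_zero_nat (2 ^ m * 16 : ℝ) |>.comp (tendsto_add_atTop_nat 1))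
  simp only [hrad] at hbound
  exact tendsto_zero_iff_norm_tendsto_zero.mpr
    (squeeze_zero (fun _ => norm_nonneg _) hbound hlim)

lemma browderTerm_roadRunner_le {m : ℕ} (hm : 1 ≤ m) (n : ℕ) :
    browderTerm 0 (roadRunnerCenter n) (roadRunnerRadius m n) (m - 1) ≤
      ENNReal.ofReal (2 ^ m / 16 * ((n + 1) * roadRunnerCenter n)) := by
  have ha := roadRunnerCenter_pos n
  have hr := roadRunnerRadius_le hm n
  have hgap : roadRunnerCenter n / 2 ≤ roadRunnerCenter n - roadRunnerRadius m n := by linarith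
  rw [browderTerm, Nat.sub_add_cancel hm, dist_zero_left, Complex.norm_real, Real.norm_eq_abs,
    abs_of_pos ha, abs_of_pos (by linarith)]
  calc ENNReal.ofReal (roadRunnerRadius m n) /
        ENNReal.ofReal ((roadRunnerCenter n - roadRunnerRadius m n) ^ m)
      ≤ ENNReal.ofReal (roadRunnerRadius m n) / ENNReal.ofReal ((roadRunnerCenter n / 2) ^ m) :=
        ENNReal.div_le_div_left (ENNReal.ofReal_le_ofReal (by gcongr)) _
    _ = ENNReal.ofReal (2 ^ m / 16 * ((n + 1) * roadRunnerCenter n)) := by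
        rw [← ENNReal.ofReal_div_of_pos (by positivity)]
        congr 1
        rw [roadRunnerRadius, div_pow, pow_succ]
        field_simp

lemma summable_succ_mul_roadRunnerCenter :
    Summable fun n : ℕ => (n + 1) * roadRunnerCenter n := by
  have h : Summable fun n : ℕ => (n : ℝ) * (1 / 2) ^ n :=
    (hasSum_coe_mul_geometric_of_norm_lt_one (by norm_num)).summable
  simpa [roadRunnerCenter] using (summable_nat_add_iff 1).mpr h

lemma browderSum_roadRunner_lt_top {m : ℕ} (hm : 1 ≤ m) :
    browderSum (fun n => (roadRunnerCenter n : ℂ)) (roadRunnerRadius m) 0 (m - 1) < ⊤ := by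
  have hsum := summable_succ_mul_roadRunnerCenter.mul_left (2 ^ m / 16)
  have hnonneg : ∀ n : ℕ, 0 ≤ 2 ^ m / 16 * ((n + 1) * roadRunnerCenter n) :=
    fun n => by have := roadRunnerCenter_pos n; positivity
  refine ENNReal.add_lt_top.mpr ⟨by simp [browderTerm], ?_⟩
  calc ∑' n, browderTerm 0 (roadRunnerCenter n) (roadRunnerRadius m n) (m - 1)
      ≤ ∑' n : ℕ, ENNReal.ofReal (2 ^ m / 16 * ((n + 1) * roadRunnerCenter n)) :=
        ENNReal.tsum_le_tsum (browderTerm_roadRunner_le hm)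
    _ = ENNReal.ofReal (∑' n : ℕ, 2 ^ m / 16 * ((n + 1) * roadRunnerCenter n)) :=
        (ENNReal.ofReal_tsum_of_nonneg hnonneg hsum).symm
    _ < ⊤ := ENNReal.ofReal_lt_top

/-- Lemma 4.5: for each `m ≥ 1` there is a road runner satisfying the Browder condition
of order `m−1` at the origin such that `R(K)` has no nondegenerate bounded point
derivation of order `m` at the origin. -/
theorem road_runner (m : ℕ) (hm : 1 ≤ m) :
    ∃ a r : ℕ → ℝ,
      (∀ n, 0 < a n) ∧ (∀ n, 0 < r n) ∧ StrictAnti a ∧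
      Filter.Tendsto a Filter.atTop (nhds 0) ∧
      (∀ n, closedBall ((a n : ℂ)) (r n) ⊆ ball (0 : ℂ) 1) ∧
      (Pairwise fun i j =>
        Disjoint (closedBall ((a i : ℂ)) (r i)) (closedBall ((a j : ℂ)) (r j))) ∧
      ∀ K : Set ℂ, K = closedBall (0 : ℂ) 1 \ ⋃ n, ball ((a n : ℂ)) (r n) →
        (0 : ℂ) ∈ K ∧
        browderSum (fun n => ((a n : ℂ))) r 0 (m - 1) < ⊤ ∧
        ¬ HasNBPD K 0 m := by
  refine ⟨roadRunnerCenter, roadRunnerRadius m, roadRunnerCenter_pos, roadRunnerRadius_pos m,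
    roadRunnerCenter_strictAnti, tendsto_roadRunnerCenter, closedBall_roadRunnerCenter_subset hm,
    pairwise_disjoint_closedBall_roadRunner hm, ?_⟩
  rintro K rfl
  exact ⟨zero_mem_roadRunner hm, browderSum_roadRunner_lt_top hm,
    not_hasNBPD_of_tendsto (zero_mem_roadRunner hm) hm (roadRunnerKernel_mem_R0 m)
      (roadRunnerKernel_apply_zero hm) (tendsto_zamMap_mul_roadRunnerKernel hm)⟩
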